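/- arXiv:1805.06196 — 2 statements merged into one kernel-verified Lean document; each statement's English description precedes it below -/
import Mathlib

section
/- Assume mo ⊆ W × W. For all events a, b, c with tx a ≠ none and tx b ≠ none, writing [x] := {y | st y x} for the st-class of x: if ¬ st a b, [a] × [b] ⊆ si-hb, and (b,c) lies in the reflexive-transitive closure of fr_T^? ; (po_T ∪ rf_T ∪ mo_T), then [a] × [c] ⊆ si-hb. -/
variable {E : Type*} {TxId : Type*} {Loc : Type*}

/-- Same-transaction relation: both events are transactional with equal transaction ids. -/
def St (tx : E → Option TxId) : E → E → Prop :=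
  fun a b => ∃ t, tx a = some t ∧ tx b = some t

/-- Transaction lifting `r_T := st ; (r \ st) ; st`. -/
def RLift (tx : E → Option TxId) (r : E → E → Prop) : E → E → Prop :=
  fun a b => ∃ c d, St tx a c ∧ r c d ∧ ¬ St tx c d ∧ St tx d b

/-- Reads-before relation `fr := (rf⁻¹ ; mo) \ id`. -/
def Fr (rf mo : E → E → Prop) : E → E → Prop :=
  fun a b => (∃ w, rf w a ∧ mo w b) ∧ a ≠ b

/-- Externally-reading reads: `toutR := codom (rf \ st)`. -/
def ToutR (tx : E → Option TxId) (rf : E → E → Prop) : Set E :=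
  { b | ∃ a, rf a b ∧ ¬ St tx a b }

/-- `si-rb := [toutR] ; fr_T ; [W]`. -/
def SiRb (tx : E → Option TxId) (W : Set E) (rf mo : E → E → Prop) : E → E → Prop :=
  fun a b => a ∈ ToutR tx rf ∧ RLift tx (Fr rf mo) a b ∧ b ∈ W

/-- SI happens-before: `si-hb := (po_T ∪ rf_T ∪ mo_T ∪ si-rb)⁺`. -/
def SiHb (tx : E → Option TxId) (W : Set E) (po rf mo : E → E → Prop) : E → E → Prop :=
  Relation.TransGen (fun a b =>
    RLift tx po a b ∨ RLift tx rf a b ∨ RLift tx mo a b ∨ SiRb tx W rf mo a b)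

/-- Non-transactional events. -/
def NTset (tx : E → Option TxId) : Set E := { e | tx e = none }

/-- `rsi-po := (po \ po_i) ∪ ([W] ; po_i ; [W])`. -/
def RsiPo (tx : E → Option TxId) (W : Set E) (po : E → E → Prop) : E → E → Prop :=
  fun a b => (po a b ∧ ¬ St tx a b) ∨ (a ∈ W ∧ (po a b ∧ St tx a b) ∧ b ∈ W)

/-- `rsi-rf := (rf ; [NT]) ∪ ([NT] ; rf ; st) ∪ rf_T ∪ (mo ; rf)_T`. -/
def RsiRf (tx : E → Option TxId) (rf mo : E → E → Prop) : E → E → Prop :=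
  fun a b =>
    (rf a b ∧ b ∈ NTset tx) ∨
    (a ∈ NTset tx ∧ ∃ c, rf a c ∧ St tx c b) ∨
    RLift tx rf a b ∨
    RLift tx (fun x y => ∃ z, mo x z ∧ rf z y) a b

/-- RSI happens-before: `rsi-hb := (rsi-po ∪ rsi-rf ∪ mo_T ∪ si-rb)⁺`. -/
def RsiHb (tx : E → Option TxId) (W : Set E) (po rf mo : E → E → Prop) : E → E → Prop :=
  Relation.TransGen (fun a b =>
    RsiPo tx W po a b ∨ RsiRf tx rf mo a b ∨ RLift tx mo a b ∨ SiRb tx W rf mo a b)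

/-- Internal consistency axiom: `rf_i ∪ mo_i ∪ fr_i ⊆ po`. -/
def INTax (tx : E → Option TxId) (po rf mo : E → E → Prop) : Prop :=
  ∀ a b, (rf a b ∨ mo a b ∨ Fr rf mo a b) → St tx a b → po a b

/-- Acyclicity: the transitive closure is irreflexive. -/
def Acyclic (r : E → E → Prop) : Prop := ∀ a, ¬ Relation.TransGen r a a

/-- SI-consistency: INT together with acyclicity of `(po_T ∪ rf_T ∪ mo_T) ; fr_T^?`. -/
def SIConsistent (tx : E → Option TxId) (po rf mo : E → E → Prop) : Prop :=
  INTax tx po rf mo ∧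
  Acyclic (fun a c => ∃ b,
    (RLift tx po a b ∨ RLift tx rf a b ∨ RLift tx mo a b) ∧
    (RLift tx (Fr rf mo) b c ∨ b = c))

/-- RSI-consistency: INT together with acyclicity of `rsi-hb|loc ∪ mo ∪ fr`. -/
def RSIConsistent (tx : E → Option TxId) (W : Set E) (loc : E → Loc)
    (po rf mo : E → E → Prop) : Prop :=
  INTax tx po rf mo ∧
  Acyclic (fun a b =>
    (RsiHb tx W po rf mo a b ∧ loc a = loc b) ∨ mo a b ∨ Fr rf mo a b)

lemma St.symm' {E TxId : Type*} {tx : E → Option TxId} {a b : E} (h : St tx a b) :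
    St tx b a := by obtain ⟨t, h1, h2⟩ := h; exact ⟨t, h2, h1⟩

lemma St.trans' {E TxId : Type*} {tx : E → Option TxId} {a b c : E} (h1 : St tx a b)
    (h2 : St tx b c) : St tx a c := by
  obtain ⟨t, ha, hb⟩ := h1; obtain ⟨t', hb', hc⟩ := h2
  rw [hb] at hb'; injection hb' with e; subst e; exact ⟨t, ha, hc⟩

lemma St.right' {E TxId : Type*} {tx : E → Option TxId} {a b : E} (h : St tx a b) :
    St tx b b := h.symm'.trans' h

lemma RLift.shift {E TxId : Type*} {tx : E → Option TxId} {r : E → E → Prop}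
    {a a' c c' : E} (h : RLift tx r a c) (h1 : St tx a' a) (h2 : St tx c c') :
    RLift tx r a' c' := by
  obtain ⟨u, v, h3, h4, h5, h6⟩ := h
  exact ⟨u, v, h1.trans' h3, h4, h5, h6.trans' h2⟩

/-- if `¬ st a b`, the product of the st-classes `[a] × [b]` is contained in
`si-hb`, and `(b,c)` lies in the reflexive-transitive closure of
`fr_T^? ; (po_T ∪ rf_T ∪ mo_T)`, then `[a] × [c] ⊆ si-hb`
(where `[x] := { y | st y x }`). -/
theorem stmt3 {E TxId : Type*} (W : Set E) (tx : E → Option TxId)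
    (po rf mo : E → E → Prop)
    (hmoWW : ∀ a b, mo a b → a ∈ W ∧ b ∈ W)
    (a b c : E) (ha : tx a ≠ none) (hb : tx b ≠ none)
    (hab : ¬ St tx a b)
    (hprod : ∀ x y, St tx x a → St tx y b → SiHb tx W po rf mo x y)
    (hbc : Relation.ReflTransGen
      (fun x z => ∃ y, (RLift tx (Fr rf mo) x y ∨ x = y) ∧
        (RLift tx po y z ∨ RLift tx rf y z ∨ RLift tx mo y z)) b c) :
    ∀ x z, St tx x a → St tx z c → SiHb tx W po rf mo x z := by
  have main : tx c ≠ none ∧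
      ∀ x z, St tx x a → St tx z c → SiHb tx W po rf mo x z := by
    induction hbc with
    | refl => exact ⟨hb, hprod⟩
    | @tail b' c' h step ih =>
      obtain ⟨hb', ihp⟩ := ih
      obtain ⟨y, hfr, hedge⟩ := step
      have hc' : tx c' ≠ none := by
        rcases hedge with h | h | h <;>
          · obtain ⟨u, v, _, _, _, t, hv, hc⟩ := h; simp [hc]
      have hshift : ∀ y' z, St tx y' y → St tx z c' →
          (RLift tx po y' z ∨ RLift tx rf y' z ∨ RLift tx mo y' z) := by
        intro y' z hy hz
        rcases hedge with h | h | h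
        · exact Or.inl (h.shift hy hz.symm')
        · exact Or.inr (Or.inl (h.shift hy hz.symm'))
        · exact Or.inr (Or.inr (h.shift hy hz.symm'))
      refine ⟨hc', fun x z hx hz => ?_⟩
      rcases hfr with hfr | rfl
      · obtain ⟨b0, y0, hb'b0, ⟨⟨w, hrf, hmo⟩, hne⟩, hnst, hy0y⟩ := hfr
        have hxb0 : SiHb tx W po rf mo x b0 := ihp x b0 hx hb'b0.symm'
        have hedge2 : RLift tx po y0 z ∨ RLift tx rf y0 z ∨ RLift tx mo y0 z :=
          hshift y0 z hy0y hz
        have hedge2' : RLift tx po y0 z ∨ RLift tx rf y0 z ∨ RLift tx mo y0 z ∨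
            SiRb tx W rf mo y0 z := by tauto
        by_cases hwb0 : St tx w b0
        · have hnwy0 : ¬ St tx w y0 := fun hh => hnst (hwb0.symm'.trans' hh)
          have e1 : RLift tx mo b0 y0 := ⟨w, y0, hwb0.symm', hmo, hnwy0, hy0y.symm'.right'⟩
          exact (hxb0.tail (Or.inr (Or.inr (Or.inl e1)))).tail hedge2'
        · have e1 : SiRb tx W rf mo b0 y0 :=
            ⟨⟨w, hrf, hwb0⟩, ⟨b0, y0, hb'b0.right', ⟨⟨w, hrf, hmo⟩, hne⟩, hnst,
              hy0y.symm'.right'⟩, (hmoWW w y0 hmo).2⟩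
          exact (hxb0.tail (Or.inr (Or.inr (Or.inr e1)))).tail hedge2'
      · obtain ⟨t, ht⟩ := Option.ne_none_iff_exists'.mp hb'
        have hyy : St tx b' b' := ⟨t, ht, ht⟩
        have hxy : SiHb tx W po rf mo x b' := ihp x b' hx hyy
        have hedge2 : RLift tx po b' z ∨ RLift tx rf b' z ∨ RLift tx mo b' z ∨
            SiRb tx W rf mo b' z := by
          have := hshift b' z hyy hz; tauto
        exact hxy.tail hedge2
  exact main.2
end

section
/- Assume: every event is transactional (NT = ∅); transactions form po-convex blocks, i.e. po_T ⊆ po; po is transitive; rf ⊆ W × R; and R ∩ W = ∅. Then the RSI happens-before relation decomposes as rsi-hb = si-hb ∪ ([W] ; po_i ; [W]). -/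
/-!
Without non-transactional events `st` is an equivalence relation, so `rsi-rf` collapses to
`rf_T ∪ (mo ; rf)_T ⊆ (rf_T ∪ mo_T)⁺`, and po-convexity of transactions makes
`po \ po_i = po_T`.
Every generator of `rsi-hb` therefore lies in `si-hb ∪ [W] ; po_i ; [W]`, and this union is
transitive: `si-hb` absorbs an internal step on either side, since lifted relations are closed
under `st`, while `si-rb` only starts at reads, never at the writes `[W] ; po_i ; [W]` ends in.
-/

variable {E : Type*} {TxId : Type*} {Loc : Type*}

/-- `[W] ; po_i ; [W]`. -/
def WPoiW (tx : E → Option TxId) (W : Set E) (po : E → E → Prop) : E → E → Prop :=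
  fun a b => a ∈ W ∧ (po a b ∧ St tx a b) ∧ b ∈ W

def SiHbStep (tx : E → Option TxId) (W : Set E) (po rf mo : E → E → Prop) :
    E → E → Prop :=
  fun a b => RLift tx po a b ∨ RLift tx rf a b ∨ RLift tx mo a b ∨ SiRb tx W rf mo a b

def RsiHbStep (tx : E → Option TxId) (W : Set E) (po rf mo : E → E → Prop) :
    E → E → Prop :=
  fun a b => RsiPo tx W po a b ∨ RsiRf tx rf mo a b ∨ RLift tx mo a b ∨ SiRb tx W rf mo a b

section

variable {tx : E → Option TxId} {W : Set E} {po rf mo : E → E → Prop} {a b c : E}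

namespace St

theorem symm (h : St tx a b) : St tx b a :=
  let ⟨t, ha, hb⟩ := h; ⟨t, hb, ha⟩

theorem trans (hab : St tx a b) (hbc : St tx b c) : St tx a c := by
  obtain ⟨t, ha, hb⟩ := hab
  obtain ⟨t', hb', hc⟩ := hbc
  cases hb.symm.trans hb'
  exact ⟨t, ha, hc⟩

theorem refl_of_NTset_eq_empty (hNT : NTset tx = ∅) (e : E) : St tx e e := by
  obtain ⟨t, ht⟩ := Option.ne_none_iff_exists'.mp fun h : e ∈ NTset tx => by simp [hNT] at h
  exact ⟨t, ht, ht⟩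

end St

namespace RLift

variable {r s : E → E → Prop}

theorem st_left (hab : St tx a b) (h : RLift tx r b c) : RLift tx r a c :=
  let ⟨x, y, hbx, hxy, hnxy, hyc⟩ := h; ⟨x, y, hab.trans hbx, hxy, hnxy, hyc⟩

theorem st_right (h : RLift tx r a b) (hbc : St tx b c) : RLift tx r a c :=
  let ⟨x, y, hax, hxy, hnxy, hyb⟩ := h; ⟨x, y, hax, hxy, hnxy, hyb.trans hbc⟩

theorem not_st (h : RLift tx r a b) : ¬ St tx a b := by
  obtain ⟨x, y, hax, -, hnxy, hyb⟩ := h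
  exact fun hab => hnxy (hax.symm.trans (hab.trans hyb.symm))

theorem of_not_st (hrefl : ∀ e, St tx e e) (h : r a b) (hn : ¬ St tx a b) : RLift tx r a b :=
  ⟨a, b, hrefl a, h, hn, hrefl b⟩

/-- Split according to whether the middle event shares a transaction with either end. -/
theorem comp_subset_transGen (hrefl : ∀ e, St tx e e)
    (h : RLift tx (fun x y => ∃ z, r x z ∧ s z y) a b) :
    Relation.TransGen (fun x y => RLift tx r x y ∨ RLift tx s x y) a b := by
  obtain ⟨x, y, hax, ⟨z, hxz, hzy⟩, hnxy, hyb⟩ := h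
  by_cases hxz' : St tx x z
  · exact .single (.inr ⟨z, y, hax.trans hxz', hzy, fun h => hnxy (hxz'.trans h), hyb⟩)
  by_cases hzy' : St tx z y
  · exact .single (.inl ⟨x, z, hax, hxz, hxz', hzy'.trans hyb⟩)
  exact .head (.inl ⟨x, z, hax, hxz, hxz', hrefl z⟩)
    (.single (.inr ⟨z, y, hrefl z, hzy, hzy', hyb⟩))

end RLift

theorem notMem_toutR_of_mem {R : Set E} (hrfR : ∀ a b, rf a b → b ∈ R) (hRW : R ∩ W = ∅)
    (hb : b ∈ W) : b ∉ ToutR tx rf := fun ⟨a, hab, _⟩ =>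
  (Set.eq_empty_iff_forall_notMem.mp hRW) b ⟨hrfR a b hab, hb⟩

theorem SiHbStep.st_right (h : SiHbStep tx W po rf mo a b) (hbc : St tx b c) (hc : c ∈ W) :
    SiHbStep tx W po rf mo a c := by
  rcases h with h | h | h | ⟨ha, h, -⟩
  · exact .inl (h.st_right hbc)
  · exact .inr (.inl (h.st_right hbc))
  · exact .inr (.inr (.inl (h.st_right hbc)))
  · exact .inr (.inr (.inr ⟨ha, h.st_right hbc, hc⟩))

/-- Only `si-rb` can fail to absorb `st` on the left; it starts at an externally-reading read. -/
theorem SiHbStep.st_left (hab : St tx a b) (hb : b ∉ ToutR tx rf)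
    (h : SiHbStep tx W po rf mo b c) : SiHbStep tx W po rf mo a c := by
  rcases h with h | h | h | ⟨hb', -⟩
  · exact .inl (h.st_left hab)
  · exact .inr (.inl (h.st_left hab))
  · exact .inr (.inr (.inl (h.st_left hab)))
  · exact absurd hb' hb

theorem SiHb.st_right (h : SiHb tx W po rf mo a b) (hbc : St tx b c) (hc : c ∈ W) :
    SiHb tx W po rf mo a c := by
  induction h with
  | single h => exact .single (SiHbStep.st_right h hbc hc)
  | tail h hstep _ => exact .tail h (SiHbStep.st_right hstep hbc hc)

theorem SiHb.st_left (hab : St tx a b) (hb : b ∉ ToutR tx rf) (h : SiHb tx W po rf mo b c) :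
    SiHb tx W po rf mo a c := by
  induction h using Relation.TransGen.head_induction_on with
  | single h => exact .single (SiHbStep.st_left hab hb h)
  | head h hrest _ => exact .head (SiHbStep.st_left hab hb h) hrest

theorem WPoiW.trans [IsTrans E po] (hab : WPoiW tx W po a b)
    (hbc : WPoiW tx W po b c) : WPoiW tx W po a c :=
  ⟨hab.1, ⟨_root_.trans hab.2.1.1 hbc.2.1.1, hab.2.1.2.trans hbc.2.1.2⟩, hbc.2.2⟩

theorem siHb_or_wPoiW_trans {R : Set E} [IsTrans E po]
    (hrfR : ∀ a b, rf a b → b ∈ R) (hRW : R ∩ W = ∅)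
    (hab : SiHb tx W po rf mo a b ∨ WPoiW tx W po a b)
    (hbc : SiHb tx W po rf mo b c ∨ WPoiW tx W po b c) :
    SiHb tx W po rf mo a c ∨ WPoiW tx W po a c := by
  rcases hab with hab | hab <;> rcases hbc with hbc | hbc
  · exact .inl (hab.trans hbc)
  · exact .inl (hab.st_right hbc.2.1.2 hbc.2.2)
  · exact .inl (SiHb.st_left hab.2.1.2 (notMem_toutR_of_mem hrfR hRW hab.2.2) hbc)
  · exact .inr (hab.trans hbc)

theorem RsiHbStep.siHb_or_wPoiW (hNT : NTset tx = ∅) (h : RsiHbStep tx W po rf mo a b) :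
    SiHb tx W po rf mo a b ∨ WPoiW tx W po a b := by
  have hrefl := St.refl_of_NTset_eq_empty hNT
  have hmo : ∀ {x y}, RLift tx mo x y → SiHbStep tx W po rf mo x y := (.inr <| .inr <| .inl ·)
  have hrf : ∀ {x y}, RLift tx rf x y → SiHbStep tx W po rf mo x y := (.inr <| .inl ·)
  rcases h with (⟨hpo, hn⟩ | h) | h | h | h
  · exact .inl (.single (.inl (RLift.of_not_st hrefl hpo hn)))
  · exact .inr h
  · rcases h with ⟨-, hb⟩ | ⟨ha, -⟩ | h | h
    · simp [hNT] at hb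
    · simp [hNT] at ha
    · exact .inl (.single (hrf h))
    · exact .inl (Relation.TransGen.mono (fun _ _ h => h.elim hmo hrf) _ _
        (RLift.comp_subset_transGen hrefl h))
  · exact .inl (.single (hmo h))
  · exact .inl (.single (.inr (.inr (.inr h))))

theorem SiHbStep.rsiHbStep (hconv : ∀ a b, RLift tx po a b → po a b)
    (h : SiHbStep tx W po rf mo a b) : RsiHbStep tx W po rf mo a b := by
  rcases h with h | h | h | h
  · exact .inl (.inl ⟨hconv a b h, h.not_st⟩)
  · exact .inr (.inl (.inr (.inr (.inl h))))
  · exact .inr (.inr (.inl h))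
  · exact .inr (.inr (.inr h))

end

/-- if every event is transactional, transactions are po-convex blocks,
`po` is transitive, `rf ⊆ W × R` and `R ∩ W = ∅`, then
`rsi-hb = si-hb ∪ ([W] ; po_i ; [W])`. -/
theorem stmt8 {E TxId : Type*} (R W : Set E) (tx : E → Option TxId)
    (po rf mo : E → E → Prop)
    (hNT : NTset tx = ∅)
    (hconv : ∀ a b, RLift tx po a b → po a b)
    (hpotrans : Transitive po)
    (hrfWR : ∀ a b, rf a b → a ∈ W ∧ b ∈ R)
    (hRW : R ∩ W = ∅) :
    ∀ a b, RsiHb tx W po rf mo a b ↔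
      (SiHb tx W po rf mo a b ∨ (a ∈ W ∧ (po a b ∧ St tx a b) ∧ b ∈ W)) := by
  have : IsTrans E po := ⟨hpotrans⟩
  intro a b
  constructor
  · intro h
    induction h with
    | single h => exact RsiHbStep.siHb_or_wPoiW hNT h
    | tail _ h ih =>
      exact siHb_or_wPoiW_trans (fun a b h => (hrfWR a b h).2) hRW ih
        (RsiHbStep.siHb_or_wPoiW hNT h)
  · rintro (h | h)
    · exact Relation.TransGen.mono (fun _ _ => SiHbStep.rsiHbStep hconv) _ _ h
    · exact .single (.inl (.inr h))
end
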